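/- arXiv:math/0611651 — 2 statements merged into one kernel-verified Lean document; each statement's English description precedes it below -/
import Mathlib

section
/- Define the iterates Y_n(x) for the step set {NE, SE, NW} by Y_0(x) = x and Y_{n+1}(x) = Y_1(Y_n(x)). Then for all n ≥ 2, 1/Y_n(x) = 1/(t·Y_{n-1}(x)) - 1/Y_{n-2}(x). -/
open PowerSeries

/-- The field `K = ℚ((t))` of formal Laurent series in `t`. -/
abbrev K := LaurentSeries ℚ

/-- The element `t` of `ℚ((t))`. -/
noncomputable def tt : K := HahnSeries.single 1 1

/-- Composition (substitution) of formal power series in `x` over a commutative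
ring; the standard formula when the inner series has zero constant term. -/
noncomputable def pscomp {R : Type*} [CommRing R] (f g : PowerSeries R) : PowerSeries R :=
  PowerSeries.mk fun n =>
    ∑ k ∈ Finset.range (n + 1), PowerSeries.coeff k f * PowerSeries.coeff n (g ^ k)

/-- The embedding of `ℚ((t))⟦x⟧` into the field `ℚ((t))((x))` of Laurent series
in `x`, in which the reciprocals `1/Yₙ` are taken. -/
noncomputable def ofPS : PowerSeries K →+* LaurentSeries K :=
  HahnSeries.ofPowerSeries ℤ K

/-!
The kernel `xy - t(x² + y² + x²y²)` is symmetric in `x` and `y`, and `Y₁` is a root of it as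
a polynomial in `y`. Substituting `x = Yₙ` shows that the kernel at `x = Y_{n+1}` has the two
roots `Y_{n+2}` and, by symmetry, `Yₙ`. They are distinct (their coefficients of `x` are
`aⁿ⁺²` and `aⁿ`, where `a = t(1 + a²)` forces `a² ≠ 1`), so Vieta's formulas for the quadratic
`t(1 + z²)y² - zy + tz²` with `z = Y_{n+1}` give `Y_{n+2} Yₙ = t z (Y_{n+2} + Yₙ)`, which is
the recurrence.
-/

open Finset

section Composition

variable {R : Type*} [CommRing R] {g : PowerSeries R}

lemma coeff_pow_eq_zero_of_lt (hg : constantCoeff g = 0) {n k : ℕ} (h : n < k) :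
    coeff n (g ^ k) = 0 :=
  coeff_of_lt_order n ((Nat.cast_lt.2 h).trans_le (le_order_pow_of_constantCoeff_eq_zero k hg))

lemma pscomp_eq_subst (hg : constantCoeff g = 0) (f : PowerSeries R) :
    pscomp f g = f.subst g := by
  ext n
  rw [pscomp, coeff_mk, coeff_subst' (HasSubst.of_constantCoeff_zero' hg)]
  refine (finsum_eq_sum_of_support_subset _ fun k hk => by_contra fun hkn => hk ?_).symm
  rw [coe_range, Set.mem_Iio, not_lt] at hkn
  simp only [coeff_pow_eq_zero_of_lt hg hkn, mul_zero]

lemma constantCoeff_pscomp (f : PowerSeries R) :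
    constantCoeff (pscomp f g) = constantCoeff f := by
  rw [← coeff_zero_eq_constantCoeff_apply, pscomp, coeff_mk]
  simp

lemma coeff_one_pscomp (f : PowerSeries R) :
    coeff 1 (pscomp f g) = coeff 1 f * coeff 1 g := by
  simp [pscomp, sum_range_succ, coeff_one]

end Composition

/-- The kernel `xy(1 - t(xy + x/y + y/x))` of the step set `{NE, SE, NW}`, cleared of
denominators. -/
def walkKernel {R : Type*} [CommRing R] (t x y : R) : R :=
  x * y - t * (x ^ 2 + y ^ 2 + x ^ 2 * y ^ 2)

section WalkKernel

variable {R : Type*} [CommRing R]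

lemma walkKernel_comm (t x y : R) : walkKernel t x y = walkKernel t y x := by
  unfold walkKernel; ring

lemma map_walkKernel {S F : Type*} [CommRing S] [FunLike F R S] [RingHomClass F R S] (f : F)
    (t x y : R) : f (walkKernel t x y) = walkKernel (f t) (f x) (f y) := by
  simp only [walkKernel, map_sub, map_mul, map_add, map_pow]

lemma inv_eq_inv_sub_inv_of_walkKernel {F : Type*} [Field F] {t z A B : F}
    (hA : walkKernel t z A = 0) (hB : walkKernel t z B = 0) (hAB : A ≠ B) (hA0 : A ≠ 0)
    (hB0 : B ≠ 0) (hlead : t * (1 + z ^ 2) ≠ 0) :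
    A⁻¹ = (t * z)⁻¹ - B⁻¹ := by
  unfold walkKernel at hA hB
  have hsum : t * (1 + z ^ 2) * (A + B) = z := by
    apply mul_left_cancel₀ (sub_ne_zero.2 hAB)
    linear_combination hB - hA
  have hprod : A * B = t * z * (A + B) := by
    apply mul_left_cancel₀ hlead
    linear_combination (A - t * z) * hsum + hA
  have htz : t * z ≠ 0 := fun h => mul_ne_zero hA0 hB0 (by rw [hprod, h, zero_mul])
  obtain ⟨ht, hz⟩ := mul_ne_zero_iff.1 htz
  field_simp
  linear_combination -hprod

lemma walkKernel_pscomp {t : R} {Y g : PowerSeries R} (hg : constantCoeff g = 0)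
    (hK : walkKernel (C t) X Y = 0) : walkKernel (C t) g (pscomp Y g) = 0 := by
  have hsub := HasSubst.of_constantCoeff_zero' hg
  have := congrArg (substAlgHom hsub) hK
  rwa [map_walkKernel, map_zero, substAlgHom_X, ← algebraMap_eq, AlgHom.commutes,
    coe_substAlgHom, ← pscomp_eq_subst hg] at this

lemma coeff_one_eq_of_walkKernel_X {t : R} {Y : PowerSeries R} (hK : walkKernel (C t) X Y = 0)
    (hY : constantCoeff Y = 0) : coeff 1 Y = t * (1 + coeff 1 Y ^ 2) := by
  obtain ⟨W, rfl⟩ := X_dvd_iff.2 hY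
  have hW : X ^ 2 * (W - C t * (1 + W ^ 2 + X ^ 2 * W ^ 2)) = X ^ 2 * 0 := by
    rw [mul_zero, ← hK, walkKernel]; ring
  have hW0 := congrArg constantCoeff (X_pow_mul_cancel hW)
  simp only [map_sub, map_mul, map_add, map_pow, map_one, map_zero, constantCoeff_C,
    constantCoeff_X, ne_eq, OfNat.ofNat_ne_zero, not_false_eq_true, zero_pow, zero_mul,
    add_zero] at hW0
  rw [coeff_succ_X_mul, coeff_zero_eq_constantCoeff_apply]
  linear_combination hW0

end WalkKernel

section KernelRoot

variable {F : Type*} [Field F] [CharZero F] {t : F} {s Y : PowerSeries F}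

/-- Squaring `2t(1 + x²)Y - x = -xs` turns the closed form of the kernel root into the
quadratic equation it solves. -/
lemma walkKernel_X_eq_zero_of_kernel_root (ht : t ≠ 0)
    (hs : s ^ 2 = 1 - 4 * C (t ^ 2) * (1 + X ^ 2))
    (hY : 2 * C t * (1 + X ^ 2) * Y = X * (1 - s)) :
    walkKernel (C t) X Y = 0 := by
  have hfactor : (4 * C t * (1 + X ^ 2) : PowerSeries F) ≠ 0 := fun h => by
    simpa [ht, map_ofNat] using congrArg constantCoeff h
  apply mul_left_cancel₀ hfactor
  rw [map_pow] at hs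
  rw [walkKernel]
  linear_combination (X + X * s - 2 * C t * (1 + X ^ 2) * Y) * hY - X ^ 2 * hs

lemma constantCoeff_eq_zero_of_kernel_root (ht : t ≠ 0)
    (hY : 2 * C t * (1 + X ^ 2) * Y = X * (1 - s)) : constantCoeff Y = 0 := by
  simpa [ht, map_ofNat] using congrArg constantCoeff hY

end KernelRoot

section Iterates

variable {R : Type*} [CommRing R] {Y : PowerSeries R} {Yit : ℕ → PowerSeries R}

lemma constantCoeff_iterate (hY : constantCoeff Y = 0) (hY0 : Yit 0 = X)
    (hrec : ∀ n, Yit (n + 1) = pscomp Y (Yit n)) (n : ℕ) : constantCoeff (Yit n) = 0 := by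
  cases n with
  | zero => simp [hY0]
  | succ n => rw [hrec, constantCoeff_pscomp, hY]

lemma coeff_one_iterate (hY0 : Yit 0 = X) (hrec : ∀ n, Yit (n + 1) = pscomp Y (Yit n))
    (n : ℕ) : coeff 1 (Yit n) = coeff 1 Y ^ n := by
  induction n with
  | zero => simp [hY0]
  | succ n ih => rw [hrec, coeff_one_pscomp, ih, pow_succ']

end Iterates

lemma sq_ne_one_of_eq_mul_one_add_sq {F : Type*} [Field F] {t a : F} (ha : a = t * (1 + a ^ 2))
    (ht : 4 * t ^ 2 ≠ 1) : a ^ 2 ≠ 1 := fun h => ht (by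
  have h2t : a = 2 * t := by rw [h] at ha; linear_combination ha
  rw [← h, h2t]; ring)

lemma tt_ne_zero : tt ≠ 0 := HahnSeries.single_ne_zero one_ne_zero

lemma four_mul_tt_sq_ne_one : 4 * tt ^ 2 ≠ 1 := fun h => by
  simpa [tt, ← HahnSeries.single_zero_ofNat, pow_two, HahnSeries.single_mul_single] using
    congrArg (HahnSeries.coeff · 0) h

instance : CharZero K := charZero_of_injective_algebraMap (algebraMap ℚ K).injective

lemma ofPS_injective : Function.Injective ofPS := HahnSeries.ofPowerSeries_injective

/-- For the step set `{NE, SE, NW}`, define the iterates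
`Y₀(x) = x` and `Y_{n+1}(x) = Y₁(Yₙ(x))`, where
`Y₁ = (x/(2t(1+x²)))(1 - √(1-4t²(1+x²)))` is the kernel root (characterized by
`2t(1+x²)·Y₁ = x(1-s)`, `s² = 1-4t²(1+x²)`).  Then for all `n ≥ 2`,
`1/Yₙ(x) = 1/(t·Y_{n-1}(x)) - 1/Y_{n-2}(x)`. -/
theorem iterated_kernel_root_recurrence
    (s Y1 : PowerSeries K)
    (hs : s ^ 2 = 1 - 4 * PowerSeries.C (tt ^ 2) * (1 + PowerSeries.X ^ 2))
    (hY1 : 2 * PowerSeries.C tt * (1 + PowerSeries.X ^ 2) * Y1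
        = PowerSeries.X * (1 - s))
    (Yit : ℕ → PowerSeries K)
    (hY0 : Yit 0 = PowerSeries.X)
    (hrec : ∀ n, Yit (n + 1) = pscomp Y1 (Yit n)) :
    ∀ n, 2 ≤ n →
      (ofPS (Yit n))⁻¹ =
        (ofPS (PowerSeries.C tt * Yit (n - 1)))⁻¹ - (ofPS (Yit (n - 2)))⁻¹ := by
  have hK := walkKernel_X_eq_zero_of_kernel_root tt_ne_zero hs hY1
  have hY1c := constantCoeff_eq_zero_of_kernel_root tt_ne_zero hY1
  have ha := coeff_one_eq_of_walkKernel_X hK hY1c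
  have ha0 : coeff 1 Y1 ≠ 0 := fun h => tt_ne_zero (by simpa [h, eq_comm] using ha)
  have hc1 := coeff_one_iterate hY0 hrec
  have hne (n : ℕ) : ofPS (Yit n) ≠ 0 := (map_ne_zero_iff _ ofPS_injective).2 fun h =>
    pow_ne_zero n ha0 (by rw [← hc1, h, map_zero])
  have hstep (n : ℕ) : walkKernel (ofPS (C tt)) (ofPS (Yit n)) (ofPS (Yit (n + 1))) = 0 := by
    rw [← map_walkKernel, hrec, walkKernel_pscomp (constantCoeff_iterate hY1c hY0 hrec n) hK,
      map_zero]
  rintro n hn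
  obtain ⟨m, rfl⟩ := Nat.exists_eq_add_of_le' hn
  rw [Nat.add_sub_cancel, show m + 2 - 1 = m + 1 from rfl, map_mul]
  refine inv_eq_inv_sub_inv_of_walkKernel (hstep (m + 1)) ((walkKernel_comm _ _ _).trans (hstep m))
    (fun hAB => ?_) (hne _) (hne _) ?_
  · refine sq_ne_one_of_eq_mul_one_add_sq ha four_mul_tt_sq_ne_one
      (mul_left_cancel₀ (pow_ne_zero m ha0) ?_)
    rw [← pow_add, ← hc1, ← hc1, ofPS_injective hAB, mul_one]
  · rw [← map_pow, ← map_one ofPS, ← map_add, ← map_mul]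
    refine (map_ne_zero_iff _ ofPS_injective).2 fun h => tt_ne_zero ?_
    simpa [constantCoeff_iterate hY1c hY0 hrec] using congrArg constantCoeff h
end

section
/- For the step set {NE, SE, NW}, the counting generating function satisfies (1 - 3t)·Q(1,1;t) = 1 - 2·∑_{n≥0} (-1)^n Y_n(1) Y_{n+1}(1), where Y_n(1) are the iterates of the kernel root evaluated at x = 1. -/
/-!
Let `Pₙ(u, v)` be the sum of `uⁱ vʲ` over the quarter-plane walks of length `n` ending at
`(i, j)`. Removing the last step of a walk gives, in any commutative ring,
`uv·Pₙ₊₁(u, v) = (u²v² + u² + v²)·Pₙ(u, v) - u²·Pₙ(u, 0) - v²·Pₙ(0, v)`,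
so `Q(u, v) = ∑ tⁿ Pₙ(u, v)` satisfies, for all power series `u, v`, the kernel equation
`K(u, v)·Q(u, v) = uv - t u² Q(u, 0) - t v² Q(v, 0)` with `K(u, v) = uv - t u²v² - t u² - t v²`
(the step set is symmetric in `x ↔ y`, so `Q(0, v) = Q(v, 0)`).
At `u = v = 1` this is `(1 - 3t)·Q(1, 1) = 1 - 2t·Q(1, 0)`. At `(Yₙ, Yₙ₊₁)` the kernel vanishes,
so `Yₙ Yₙ₊₁ = Fₙ + Fₙ₊₁` with `Fₙ = t Yₙ² Q(Yₙ, 0)`: the alternating sum telescopes to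
`F₀ = t·Q(1, 0)`, the tails vanishing because `Fₘ₊₁` has order `> m`.
-/

open Finset PowerSeries

/-- The partial sum of the first `k` steps of a walk. -/
def psum {n : ℕ} (w : Fin n → ℤ × ℤ) (k : ℕ) : ℤ × ℤ :=
  ∑ i ∈ Finset.univ.filter (fun i : Fin n => (i : ℕ) < k), w i

/-- A quarter-plane walk. -/
def IsQWalk (Y : Finset (ℤ × ℤ)) {n : ℕ} (w : Fin n → ℤ × ℤ) : Prop :=
  (∀ i, w i ∈ Y) ∧ ∀ k, 0 ≤ (psum w k).1 ∧ 0 ≤ (psum w k).2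

/-- The number of quarter-plane walks of length `n`. -/
noncomputable def walkCount (Y : Finset (ℤ × ℤ)) (n : ℕ) : ℕ :=
  Nat.card {w : Fin n → ℤ × ℤ // IsQWalk Y w}

/-- The counting generating function `Q(1,1;t)` for the step set
`{NE, SE, NW} = {(1,1),(1,-1),(-1,1)}`. -/
noncomputable def Wgf : PowerSeries ℚ :=
  PowerSeries.mk fun n => (walkCount {((1:ℤ),(1:ℤ)), (1,-1), (-1,1)} n : ℚ)

/-- The (t-adically convergent) sum `∑_{n≥0} (-1)ⁿ Yₙ(1) Y_{n+1}(1)`: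
since `Yₙ(1)` has `t`-order `n`, only `n ≤ m` contributes to the coefficient
of `tᵐ`. -/
noncomputable def altSum1 (Ys : ℕ → PowerSeries ℚ) : PowerSeries ℚ :=
  PowerSeries.mk fun m =>
    ∑ n ∈ Finset.range (m + 1),
      (-1 : ℚ) ^ n * PowerSeries.coeff m (Ys n * Ys (n + 1))

section Walks

variable {Y : Finset (ℤ × ℤ)} {n : ℕ}

lemma psum_of_le (w : Fin n → ℤ × ℤ) {k : ℕ} (h : n ≤ k) : psum w k = psum w n := by
  unfold psum
  congr 1
  ext i
  simp only [mem_filter, mem_univ, true_and]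
  omega

lemma psum_snoc (w : Fin n → ℤ × ℤ) (s : ℤ × ℤ) (k : ℕ) :
    psum (Fin.snoc w s : Fin (n + 1) → ℤ × ℤ) k = psum w k + if n < k then s else 0 := by
  simp only [psum, sum_filter, Fin.sum_univ_castSucc, Fin.snoc_castSucc, Fin.snoc_last,
    Fin.val_castSucc, Fin.val_last]

lemma isQWalk_iff {w : Fin n → ℤ × ℤ} : IsQWalk Y w ↔ (∀ i, w i ∈ Y) ∧ ∀ k, 0 ≤ psum w k := by
  simp only [IsQWalk, Prod.le_def, Prod.fst_zero, Prod.snd_zero]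

lemma isQWalk_snoc_iff {w : Fin n → ℤ × ℤ} {s : ℤ × ℤ} :
    IsQWalk Y (Fin.snoc w s) ↔ IsQWalk Y w ∧ s ∈ Y ∧ 0 ≤ psum w n + s := by
  simp only [isQWalk_iff, Fin.forall_fin_succ', Fin.snoc_castSucc, Fin.snoc_last, psum_snoc]
  constructor
  · rintro ⟨⟨hw, hs⟩, hk⟩
    refine ⟨⟨hw, fun k => ?_⟩, hs, by simpa [psum_of_le w n.le_succ] using hk (n + 1)⟩
    rcases le_or_gt k n with h | h
    · simpa [Nat.not_lt.mpr h] using hk k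
    · simpa [psum_of_le w h.le, Nat.not_lt.mpr le_rfl] using hk n
  · rintro ⟨⟨hw, hk⟩, hs, hend⟩
    refine ⟨⟨hw, hs⟩, fun k => ?_⟩
    split_ifs with h
    · rwa [psum_of_le w h.le]
    · simpa using hk k

lemma psum_swap (w : Fin n → ℤ × ℤ) (k : ℕ) :
    psum (Prod.swap ∘ w) k = (psum w k).swap := by
  simp [psum, Prod.ext_iff, Prod.fst_sum, Prod.snd_sum]

end Walks

open Classical in
noncomputable def qwalks (Y : Finset (ℤ × ℤ)) (n : ℕ) : Finset (Fin n → ℤ × ℤ) :=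
  {w ∈ Fintype.piFinset fun _ => Y | IsQWalk Y w}

section QWalks

variable {Y : Finset (ℤ × ℤ)} {n : ℕ}

@[simp]
lemma mem_qwalks {w : Fin n → ℤ × ℤ} : w ∈ qwalks Y n ↔ IsQWalk Y w := by
  classical
  simp only [qwalks, mem_filter, Fintype.mem_piFinset, and_iff_right_iff_imp]
  exact fun hw => hw.1

lemma walkCount_eq_card_qwalks : walkCount Y n = #(qwalks Y n) :=
  Nat.subtype_card _ fun _ => mem_qwalks

lemma sum_qwalks_succ {M : Type*} [AddCommMonoid M] (f : (Fin (n + 1) → ℤ × ℤ) → M) :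
    ∑ w ∈ qwalks Y (n + 1), f w
      = ∑ w ∈ qwalks Y n, ∑ s ∈ Y with 0 ≤ psum w n + s, f (Fin.snoc w s) := by
  rw [sum_sigma']
  refine sum_bij' (fun w _ => ⟨Fin.init w, w (Fin.last n)⟩) (fun p _ => Fin.snoc p.1 p.2)
    ?_ ?_ ?_ ?_ ?_
  · intro w hw
    rw [mem_qwalks, ← Fin.snoc_init_self w, isQWalk_snoc_iff] at hw
    simpa [mem_sigma, mem_filter] using hw
  · rintro ⟨w, s⟩ hp
    simp only [mem_sigma, mem_filter, mem_qwalks] at hp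
    exact mem_qwalks.mpr (isQWalk_snoc_iff.mpr ⟨hp.1, hp.2⟩)
  · intro w _
    exact Fin.snoc_init_self w
  · rintro ⟨w, s⟩ _
    simp only [Fin.init_snoc, Fin.snoc_last]
  · intro w _
    simp only [Fin.snoc_init_self]

end QWalks

section WalkPoly

variable {R : Type*} [CommSemiring R] {Y : Finset (ℤ × ℤ)} {n : ℕ}

-- Endpoints of quarter-plane walks are nonnegative, so `toNat` loses nothing.
def quadMonomial (u v : R) (p : ℤ × ℤ) : R := u ^ p.1.toNat * v ^ p.2.toNat

noncomputable def walkPoly (Y : Finset (ℤ × ℤ)) (n : ℕ) (u v : R) : R :=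
  ∑ w ∈ qwalks Y n, quadMonomial u v (psum w n)

lemma walkPoly_zero (u v : R) : walkPoly Y 0 u v = 1 := by
  have h0 : IsQWalk Y (Fin.elim0 : Fin 0 → ℤ × ℤ) := by simp [IsQWalk, psum]
  rw [walkPoly, sum_eq_single_of_mem Fin.elim0 (mem_qwalks.mpr h0)
    fun w _ hw => absurd (Subsingleton.elim w _) hw]
  simp [quadMonomial, psum]

lemma walkPoly_one_one : walkPoly Y n (1 : R) 1 = walkCount Y n := by
  simp [walkPoly, quadMonomial, walkCount_eq_card_qwalks]

lemma walkPoly_comm (hY : ∀ s ∈ Y, s.swap ∈ Y) (u v : R) :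
    walkPoly Y n u v = walkPoly Y n v u := by
  have hswap : ∀ w, w ∈ qwalks Y n → Prod.swap ∘ w ∈ qwalks Y n := by
    intro w hw
    obtain ⟨hsteps, hpos⟩ := mem_qwalks.mp hw
    exact mem_qwalks.mpr ⟨fun i => hY _ (hsteps i), fun k => by
      simpa [psum_swap, and_comm] using hpos k⟩
  refine sum_nbij' (Prod.swap ∘ ·) (Prod.swap ∘ ·) hswap hswap
    (fun w _ => by ext <;> rfl) (fun w _ => by ext <;> rfl) fun w _ => ?_
  simp [quadMonomial, psum_swap, mul_comm]

end WalkPoly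

def neSeNw : Finset (ℤ × ℤ) := {((1:ℤ),(1:ℤ)), (1,-1), (-1,1)}

lemma swap_mem_neSeNw {s : ℤ × ℤ} (hs : s ∈ neSeNw) : s.swap ∈ neSeNw := by
  simp only [neSeNw, mem_insert, mem_singleton] at hs ⊢
  rcases hs with rfl | rfl | rfl <;> simp

section Kernel

variable {R : Type*} [CommRing R]

lemma mul_sum_quadMonomial_add_step (u v : R) {p : ℤ × ℤ} (hp : 0 ≤ p) :
    u * v * ∑ s ∈ neSeNw with 0 ≤ p + s, quadMonomial u v (p + s)
      = (u ^ 2 * v ^ 2 + u ^ 2 + v ^ 2) * quadMonomial u v p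
        - u ^ 2 * quadMonomial u 0 p - v ^ 2 * quadMonomial 0 v p := by
  obtain ⟨a, b⟩ := p
  obtain ⟨ha, hb⟩ := Prod.mk_le_mk.mp hp
  lift a to ℕ using ha
  lift b to ℕ using hb
  rw [sum_filter, neSeNw, sum_insert (by decide), sum_insert (by decide), sum_singleton]
  rcases a with _ | a <;> rcases b with _ | b <;>
    simp [quadMonomial, Prod.le_def, add_nonneg, Int.toNat_add] <;> ring

lemma mul_walkPoly_succ (n : ℕ) (u v : R) :
    u * v * walkPoly neSeNw (n + 1) u v
      = (u ^ 2 * v ^ 2 + u ^ 2 + v ^ 2) * walkPoly neSeNw n u v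
        - u ^ 2 * walkPoly neSeNw n u 0 - v ^ 2 * walkPoly neSeNw n 0 v := by
  simp only [walkPoly, sum_qwalks_succ, mul_sum, ← sum_sub_distrib]
  refine sum_congr rfl fun w hw => ?_
  rw [← mul_sum_quadMonomial_add_step u v ((isQWalk_iff.mp (mem_qwalks.mp hw)).2 n), mul_sum]
  simp only [psum_snoc, lt_add_one, if_true, psum_of_le w n.le_succ]

end Kernel

section Series

open PowerSeries.WithPiTopology

lemma summable_X_pow_mul {R : Type*} [Semiring R] [TopologicalSpace R] (f : ℕ → R⟦X⟧) :
    Summable fun n => X ^ n * f n := by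
  refine (summable_iff_summable_coeff _).mpr fun d => summable_of_hasFiniteSupport <|
    (Set.finite_Iic d).subset fun n hn => ?_
  by_contra hnd
  exact hn (by simp [coeff_X_pow_mul', show ¬ n ≤ d from hnd])

noncomputable def walkGF (u v : ℚ⟦X⟧) : ℚ⟦X⟧ := ∑' n, X ^ n * walkPoly neSeNw n u v

lemma walkGF_comm (u v : ℚ⟦X⟧) : walkGF u v = walkGF v u := by
  simp only [walkGF, walkPoly_comm (fun _ => swap_mem_neSeNw) u v]

lemma walkGF_one_one : walkGF 1 1 = Wgf := by
  conv_rhs => rw [as_tsum Wgf]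
  refine tsum_congr fun n => ?_
  rw [walkPoly_one_one, Wgf, coeff_mk, X_pow_eq, ← map_natCast C, ← monomial_zero_eq_C_apply,
    monomial_mul_monomial, add_zero, one_mul]
  rfl

lemma kernel_mul_walkGF (u v : ℚ⟦X⟧) :
    (u * v - X * u ^ 2 * v ^ 2 - X * u ^ 2 - X * v ^ 2) * walkGF u v
      = u * v - X * u ^ 2 * walkGF u 0 - X * v ^ 2 * walkGF v 0 := by
  have hs (a b : ℚ⟦X⟧) := summable_X_pow_mul fun n => walkPoly neSeNw n a b
  have hshift : u * v * walkGF u v = u * v + (X * (u ^ 2 * v ^ 2 + u ^ 2 + v ^ 2) * walkGF u v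
      - X * u ^ 2 * walkGF u 0 - X * v ^ 2 * walkGF 0 v) := by
    calc u * v * walkGF u v
        = ∑' n, u * v * (X ^ n * walkPoly neSeNw n u v) := ((hs u v).tsum_mul_left _).symm
      _ = u * v + ∑' n, u * v * (X ^ (n + 1) * walkPoly neSeNw (n + 1) u v) := by
        rw [((hs u v).mul_left _).tsum_eq_zero_add, pow_zero, one_mul, walkPoly_zero, mul_one]
      _ = u * v + ∑' n, (X * (u ^ 2 * v ^ 2 + u ^ 2 + v ^ 2) * (X ^ n * walkPoly neSeNw n u v)
            - X * u ^ 2 * (X ^ n * walkPoly neSeNw n u 0)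
            - X * v ^ 2 * (X ^ n * walkPoly neSeNw n 0 v)) := by
        congr 1
        refine tsum_congr fun n => ?_
        linear_combination X ^ (n + 1) * mul_walkPoly_succ n u v
      _ = _ := by
        rw [((hs u v).mul_left _ |>.sub <| (hs u 0).mul_left _).tsum_sub ((hs 0 v).mul_left _),
          ((hs u v).mul_left _).tsum_sub ((hs u 0).mul_left _), (hs u v).tsum_mul_left,
          (hs u 0).tsum_mul_left, (hs 0 v).tsum_mul_left]
        rfl
  rw [walkGF_comm 0 v] at hshift
  linear_combination hshift

end Series

lemma altSum1_eq_of_mul_eq_add {Ys F : ℕ → ℚ⟦X⟧} (hF : ∀ n, Ys n * Ys (n + 1) = F n + F (n + 1))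
    (htail : ∀ m, coeff m (F (m + 1)) = 0) : altSum1 Ys = F 0 := by
  ext m
  calc coeff m (altSum1 Ys)
      = ∑ n ∈ range (m + 1),
          ((-1) ^ n * coeff m (F n) - (-1) ^ (n + 1) * coeff m (F (n + 1))) := by
        simp only [altSum1, coeff_mk, hF, map_add]
        exact sum_congr rfl fun n _ => by ring
    _ = coeff m (F 0) := by
        rw [sum_range_sub' fun n => (-1) ^ n * coeff m (F n), htail]
        simp

/-- For the step set `{NE, SE, NW}`,
`(1 - 3t)·Q(1,1;t) = 1 - 2·∑_{n≥0} (-1)ⁿ Yₙ(1) Y_{n+1}(1)`, where `Y₀(1) = 1`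
and `Yₙ(1)` are the iterates of the kernel root evaluated at `x = 1`,
characterized by the kernel relation `K(Yₙ(1), Y_{n+1}(1)) = 0` for
`K(x,y) = xy - tx²y² - tx² - ty²` together with `ord_t Yₙ(1) = n` (which pins
the branch: `Y_{n+1}(1) = Y₁(Yₙ(1))` is the small root). -/
theorem counting_gf_iterated_kernel
    (Ys : ℕ → PowerSeries ℚ)
    (hY0 : Ys 0 = 1)
    (hker : ∀ n,
      Ys n * Ys (n + 1)
        - PowerSeries.X * (Ys n) ^ 2 * (Ys (n + 1)) ^ 2
        - PowerSeries.X * (Ys n) ^ 2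
        - PowerSeries.X * (Ys (n + 1)) ^ 2 = 0)
    (hord : ∀ n, (Ys n).order = n) :
    (1 - 3 * PowerSeries.X) * Wgf = 1 - 2 * altSum1 Ys := by
  set F : ℕ → ℚ⟦X⟧ := fun n => X * Ys n ^ 2 * walkGF (Ys n) 0
  have hF n : Ys n * Ys (n + 1) = F n + F (n + 1) := by
    have h := kernel_mul_walkGF (Ys n) (Ys (n + 1))
    rw [hker n, zero_mul] at h
    linear_combination -h
  have htail m : coeff m (F (m + 1)) = 0 := by
    rw [show F (m + 1) = X * Ys (m + 1) * walkGF (Ys (m + 1)) 0 * Ys (m + 1) by ring]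
    exact coeff_mul_of_lt_order (by rw [hord]; exact_mod_cast m.lt_succ_self)
  rw [altSum1_eq_of_mul_eq_add hF htail, ← walkGF_one_one]
  simp only [F, hY0]
  linear_combination kernel_mul_walkGF 1 1
end
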